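/- Let $G(z), \Theta(z)$ be formal power series in $z^{-1}$ with coefficients $\{g_t\}, \{\theta_t\}$, $g_0 = \theta_0 = 1$. Define $\mathfrak{D}_{\tau',\tau} = g_{\tau'+\tau} - g_{\tau'+\tau+1} + (g_{\tau-1} - g_\tau)*\theta_{\tau'+\tau+1} + (\theta_\tau - \theta_{\tau-1})*g_{\tau'+\tau+1} + g_\tau * (\theta_{\tau'+\tau} - \delta_{\tau',0}\theta_\tau) - \theta_\tau * (g_{\tau'+\tau} - \delta_{\tau',0}g_\tau)$, where $*$ is the convolution $a_{\tau+i}*b_{\tau+j} = \sum_{s=0}^{\tau}a_{s+i}b_{\tau-s+j}$ and negative-index terms are zero. Then the two-variable generating function $\sum_{\tau',\tau\ge0}\mathfrak{D}_{\tau',\tau} y^{-\tau'}z^{-\tau}$ equals $(y^{-1}+z^{-1}-1)[G(z)\Delta_\Theta(y,z) - \Theta(z)\Delta_G(y,z)] + \Delta_{G_1}(y,z) - \Delta_G(y,z)$, where $G_1(z) = z^{-1}G(z)$ and $\Delta_F(y,z) = (F(y)-F(z))/(y^{-1}-z^{-1})$. -/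

import Mathlib

/-!
Both sides are read off in terms of the skew convolution
`W(n, N) = ∑_{s<N} (g_s θ_{n-s} - θ_s g_{n-s})`. The series
`G(z)Δ_Θ(y,z) - Θ(z)Δ_G(y,z)` has coefficients `W(τ'+τ+1, τ+1)`, so multiplying it by `y⁻¹`
and by `z⁻¹` gives `W(τ'+τ, τ+1)` and `W(τ'+τ, τ)`: the boundary cases are `W(τ, τ+1) = 0`
(antisymmetry) and the empty sum `W(n, 0) = 0`. On the other side, summation by parts turns
the first two convolutions of `𝔇` into `W(τ'+τ, τ) - W(τ'+τ+1, τ+1)`, while the last two give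
`W(τ'+τ, τ+1)`, the Kronecker correction being `W(τ, τ+1) = 0` again.
-/

open PowerSeries Finset

section

variable {R : Type*} [CommRing R]

def skewConv (g θ : ℕ → R) (n N : ℕ) : R :=
  ∑ s ∈ range N, (g s * θ (n - s) - θ s * g (n - s))

lemma skewConv_zero (g θ : ℕ → R) (n : ℕ) : skewConv g θ n 0 = 0 :=
  sum_range_zero _

lemma skewConv_self_succ (g θ : ℕ → R) (n : ℕ) : skewConv g θ n (n + 1) = 0 := by
  have hswap : ∑ p ∈ antidiagonal n, g p.1 * θ p.2 = ∑ p ∈ antidiagonal n, θ p.1 * g p.2 := by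
    rw [← Nat.sum_antidiagonal_swap]
    simp only [Prod.fst_swap, Prod.snd_swap, mul_comm]
  rw [skewConv, sum_sub_distrib, ← Nat.sum_antidiagonal_eq_sum_range_succ (fun i j => g i * θ j),
    ← Nat.sum_antidiagonal_eq_sum_range_succ (fun i j => θ i * g j), hswap, sub_self]

lemma sum_range_succ_shift_sub_mul (h k : ℕ → R) (n : ℕ) :
    ∑ s ∈ range (n + 1), ((if s = 0 then 0 else h (s - 1)) - h s) * k s
      = ∑ s ∈ range n, h s * k (s + 1) - ∑ s ∈ range (n + 1), h s * k s := by
  simp only [sub_mul, sum_sub_distrib]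
  rw [sum_range_succ' (fun s => (if s = 0 then 0 else h (s - 1)) * k s)]
  simp

lemma summation_by_parts_eq_skewConv (g θ : ℕ → R) (m τ : ℕ) :
    ∑ s ∈ range (τ + 1), ((if s = 0 then 0 else g (s - 1)) - g s) * θ (m + τ - s + 1)
      + ∑ s ∈ range (τ + 1), (θ s - (if s = 0 then 0 else θ (s - 1))) * g (m + τ - s + 1)
      = skewConv g θ (m + τ) τ - skewConv g θ (m + τ + 1) (τ + 1) := by
  have hθ : ∑ s ∈ range (τ + 1), (θ s - (if s = 0 then 0 else θ (s - 1))) * g (m + τ - s + 1)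
      = -∑ s ∈ range (τ + 1), ((if s = 0 then 0 else θ (s - 1)) - θ s) * g (m + τ - s + 1) := by
    rw [← sum_neg_distrib]
    simp only [← neg_mul, neg_sub]
  have hshifted : ∑ s ∈ range τ, (g s * θ (m + τ - (s + 1) + 1) - θ s * g (m + τ - (s + 1) + 1))
      = skewConv g θ (m + τ) τ :=
    sum_congr rfl fun s hs => by
      rw [mem_range] at hs
      rw [show m + τ - (s + 1) + 1 = m + τ - s by omega]
  have hunshifted : ∑ s ∈ range (τ + 1), (g s * θ (m + τ - s + 1) - θ s * g (m + τ - s + 1))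
      = skewConv g θ (m + τ + 1) (τ + 1) :=
    sum_congr rfl fun s hs => by
      rw [mem_range] at hs
      rw [show m + τ - s + 1 = m + τ + 1 - s by omega]
  rw [hθ, sum_range_succ_shift_sub_mul g, sum_range_succ_shift_sub_mul θ, ← hshifted,
    ← hunshifted, sum_sub_distrib, sum_sub_distrib]
  ring

lemma sum_sub_sum_kronecker_eq_skewConv (g θ : ℕ → R) (m τ : ℕ) :
    ∑ s ∈ range (τ + 1), g s * (θ (m + τ - s) - (if m = 0 then 1 else 0) * θ (τ - s))
      - ∑ s ∈ range (τ + 1), θ s * (g (m + τ - s) - (if m = 0 then 1 else 0) * g (τ - s))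
      = skewConv g θ (m + τ) (τ + 1) :=
  calc _ = skewConv g θ (m + τ) (τ + 1) - (if m = 0 then 1 else 0) * skewConv g θ τ (τ + 1) := by
        simp only [skewConv, mul_sum, ← sum_sub_distrib]
        exact sum_congr rfl fun _ _ => by ring
    _ = _ := by rw [skewConv_self_succ, mul_zero, sub_zero]

/-- `G(z)Δ_Θ(y,z) - Θ(z)Δ_G(y,z)`, with `y⁻¹` the outer and `z⁻¹` the inner variable. -/
noncomputable def crossDivDiff (g θ : ℕ → R) : R⟦X⟧⟦X⟧ :=
  C (mk g) * mk (fun t' => mk fun t => θ (t' + t + 1))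
    - C (mk θ) * mk (fun t' => mk fun t => g (t' + t + 1))

lemma coeff_coeff_C_mul (f : ℕ → R) (F : R⟦X⟧⟦X⟧) (i j : ℕ) :
    coeff j (coeff i (C (mk f) * F)) = ∑ s ∈ range (j + 1), f s * coeff (j - s) (coeff i F) := by
  rw [coeff_C_mul, coeff_mul, Nat.sum_antidiagonal_eq_sum_range_succ_mk]
  simp only [coeff_mk]

lemma coeff_coeff_crossDivDiff (g θ : ℕ → R) (i j : ℕ) :
    coeff j (coeff i (crossDivDiff g θ)) = skewConv g θ (i + j + 1) (j + 1) := by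
  simp only [crossDivDiff, map_sub, coeff_coeff_C_mul, coeff_mk, skewConv, ← sum_sub_distrib]
  refine sum_congr rfl fun s hs => ?_
  rw [mem_range] at hs
  rw [show i + (j - s) + 1 = i + j + 1 - s by omega]

lemma coeff_coeff_X_mul_crossDivDiff (g θ : ℕ → R) (i j : ℕ) :
    coeff j (coeff i (X * crossDivDiff g θ)) = skewConv g θ (i + j) (j + 1) := by
  rcases i with _ | i
  · rw [coeff_zero_X_mul, map_zero, zero_add, skewConv_self_succ]
  · rw [coeff_succ_X_mul, coeff_coeff_crossDivDiff, Nat.add_right_comm]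

lemma coeff_coeff_C_X_mul_crossDivDiff (g θ : ℕ → R) (i j : ℕ) :
    coeff j (coeff i (C X * crossDivDiff g θ)) = skewConv g θ (i + j) j := by
  rw [coeff_C_mul]
  rcases j with _ | j
  · rw [coeff_zero_X_mul, skewConv_zero]
  · rw [coeff_succ_X_mul, coeff_coeff_crossDivDiff, Nat.add_assoc]

end

theorem onsager_generating_function_general (g θ : ℕ → ℝ) :
    PowerSeries.mk (fun τ' => PowerSeries.mk fun τ =>
        (g (τ' + τ) - g (τ' + τ + 1))
        + ∑ s ∈ Finset.range (τ + 1),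
            ((if s = 0 then 0 else g (s - 1)) - g s) * θ (τ' + τ - s + 1)
        + ∑ s ∈ Finset.range (τ + 1),
            (θ s - (if s = 0 then 0 else θ (s - 1))) * g (τ' + τ - s + 1)
        + ∑ s ∈ Finset.range (τ + 1),
            g s * (θ (τ' + τ - s) - (if τ' = 0 then 1 else 0) * θ (τ - s))
        - ∑ s ∈ Finset.range (τ + 1),
            θ s * (g (τ' + τ - s) - (if τ' = 0 then 1 else 0) * g (τ - s))) =
      (PowerSeries.X + PowerSeries.C (R := PowerSeries ℝ) PowerSeries.X - 1) *
          (PowerSeries.C (R := PowerSeries ℝ) (PowerSeries.mk g) *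
              PowerSeries.mk (fun t' => PowerSeries.mk fun t => θ (t' + t + 1)) -
            PowerSeries.C (R := PowerSeries ℝ) (PowerSeries.mk θ) *
              PowerSeries.mk (fun t' => PowerSeries.mk fun t => g (t' + t + 1)))
        + PowerSeries.mk (fun t' => PowerSeries.mk fun t => g (t' + t))
        - PowerSeries.mk (fun t' => PowerSeries.mk fun t => g (t' + t + 1)) := by
  change _ = (X + C X - 1) * crossDivDiff g θ + _ - _
  ext τ' τ
  rw [sub_mul, add_mul, one_mul]
  simp only [map_add, map_sub, coeff_mk, coeff_coeff_X_mul_crossDivDiff,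
    coeff_coeff_C_X_mul_crossDivDiff, coeff_coeff_crossDivDiff]
  linear_combination
    summation_by_parts_eq_skewConv g θ τ' τ + sum_sub_sum_kronecker_eq_skewConv g θ τ' τ

/-- The two-variable generating function `∑_{τ',τ≥0} 𝔇_{τ',τ} y^{-τ'} z^{-τ}` of the array
`𝔇_{τ',τ} = g_{τ'+τ} - g_{τ'+τ+1} + (g_{τ-1}-g_τ)*θ_{τ'+τ+1} + (θ_τ-θ_{τ-1})*g_{τ'+τ+1}
+ g_τ*(θ_{τ'+τ} - δ_{τ',0}θ_τ) - θ_τ*(g_{τ'+τ} - δ_{τ',0}g_τ)` (convolutions `*` over `τ`,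
negative indices giving `0`) equals
`(y⁻¹+z⁻¹-1)[G(z)Δ_Θ(y,z) - Θ(z)Δ_G(y,z)] + Δ_{G₁}(y,z) - Δ_G(y,z)`,
working in `ℝ[[y⁻¹]][[z⁻¹]]`, where `Δ_F(y,z) = ∑ f_{t'+t+1} y^{-t'} z^{-t}` is the divided
difference and `G₁(z) = z⁻¹G(z)` (so `Δ_{G₁}` has coefficients `g_{t'+t}`). -/
theorem onsager_generating_function (g θ : ℕ → ℝ) (hg0 : g 0 = 1) (hθ0 : θ 0 = 1) :
    PowerSeries.mk (fun τ' => PowerSeries.mk fun τ =>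
        (g (τ' + τ) - g (τ' + τ + 1))
        + ∑ s ∈ Finset.range (τ + 1),
            ((if s = 0 then 0 else g (s - 1)) - g s) * θ (τ' + τ - s + 1)
        + ∑ s ∈ Finset.range (τ + 1),
            (θ s - (if s = 0 then 0 else θ (s - 1))) * g (τ' + τ - s + 1)
        + ∑ s ∈ Finset.range (τ + 1),
            g s * (θ (τ' + τ - s) - (if τ' = 0 then 1 else 0) * θ (τ - s))
        - ∑ s ∈ Finset.range (τ + 1),
            θ s * (g (τ' + τ - s) - (if τ' = 0 then 1 else 0) * g (τ - s))) =
      (PowerSeries.X + PowerSeries.C (R := PowerSeries ℝ) PowerSeries.X - 1) *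
          (PowerSeries.C (R := PowerSeries ℝ) (PowerSeries.mk g) *
              PowerSeries.mk (fun t' => PowerSeries.mk fun t => θ (t' + t + 1)) -
            PowerSeries.C (R := PowerSeries ℝ) (PowerSeries.mk θ) *
              PowerSeries.mk (fun t' => PowerSeries.mk fun t => g (t' + t + 1)))
        + PowerSeries.mk (fun t' => PowerSeries.mk fun t => g (t' + t))
        - PowerSeries.mk (fun t' => PowerSeries.mk fun t => g (t' + t + 1)) :=
  onsager_generating_function_general g θ
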